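/- Fix m ≥ 1, h ≥ 2, δ > 0 and an integer k ≥ 1, and let ξ ∈ Ξ. In any configuration on the slab 𝕊_h, if the event E_m^{2^j m}(ξ) occurs for every j ≥ 0, then ξ is seen from some vertex of ∂Λ_{m+1} within 𝕊_h, i.e. there is an infinite self-avoiding path in 𝕊_h starting at a vertex of ∂Λ_{m+1} along which ξ is read. -/

import Mathlib

open MeasureTheory Set

namespace PercWords

/-- Vertices of the hypercubic lattice `ℤ^d`. -/
abbrev Vtx (d : ℕ) := Fin d → ℤ

/-- Site percolation configurations on `ℤ^d` (`true` = state 1, `false` = state 0). -/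
abbrev Config (d : ℕ) := Vtx d → Bool

/-- `u ∼ v` : the Euclidean distance between `u` and `v` is `1`. -/
def adj {d : ℕ} (u v : Vtx d) : Prop := (∑ i, (u i - v i) ^ 2) = 1

/-- `μ` is Bernoulli site percolation with parameter `p` on the index set `ι`:
a probability measure under which, independently, each site has state `true`
with probability `p` and state `false` with probability `1 - p`. -/
def IsBernoulliFam {ι : Type} (p : ℝ) (μ : Measure (ι → Bool)) : Prop :=
  IsProbabilityMeasure μ ∧
    ∀ (s : Finset ι) (f : ι → Bool),
      μ {ω | ∀ v ∈ s, ω v = f v} =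
        ∏ v ∈ s, ENNReal.ofReal (if f v then p else 1 - p)

/-- The word `ξ` is seen from `v` along an infinite self-avoiding path all of whose
vertices lie in `A`. -/
def seesWordIn {d : ℕ} (ω : Config d) (ξ : ℕ → Bool) (A : Set (Vtx d)) (v : Vtx d) : Prop :=
  ∃ γ : ℕ → Vtx d, γ 0 = v ∧ Function.Injective γ ∧
    (∀ i, adj (γ i) (γ (i + 1))) ∧ (∀ i, γ i ∈ A) ∧ (∀ i, ω (γ i) = ξ i)

/-- The word `ξ` is seen from `v` in the configuration `ω`. -/
def seesWord {d : ℕ} (ω : Config d) (ξ : ℕ → Bool) (v : Vtx d) : Prop :=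
  seesWordIn ω ξ Set.univ v

/-- The slab `𝕊_h = ℤ² × (0, hk] × (−k, k]^{d−3}` inside `ℤ^d`. -/
def slabS (d k h : ℕ) : Set (Vtx d) :=
  {x | ∀ i : Fin d,
    ((i : ℕ) = 2 → 0 < x i ∧ x i ≤ (h : ℤ) * (k : ℤ)) ∧
    (3 ≤ (i : ℕ) → -(k : ℤ) < x i ∧ x i ≤ (k : ℤ))}

/-- The box `Λ_n = [−kn, kn]² × (0, hk] × (−k, k]^{d−3}`. -/
def lamBox (d k h n : ℕ) : Set (Vtx d) :=
  {x | x ∈ slabS d k h ∧ ∀ i : Fin d, (i : ℕ) ≤ 1 → |x i| ≤ (k : ℤ) * (n : ℤ)}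

/-- The inner vertex boundary `∂Λ_n` of `Λ_n` with respect to the slab `𝕊_h`. -/
def lamBdry (d k h n : ℕ) : Set (Vtx d) :=
  {x | x ∈ lamBox d k h n ∧ ∃ y, adj x y ∧ y ∈ slabS d k h ∧ y ∉ lamBox d k h n}

/-- `x ⇒^{ξ_{[a,b]}} y` inside `A` : there is a self-avoiding path
`x = v₀ ∼ ⋯ ∼ v_{b−a} = y` contained in `A` with `ω (v i) = ξ (a + i)` for all
`0 ≤ i ≤ b − a` (i.e. the finite word `ξ_{[a,b]}` is read along the path). -/
def wordConnIn {d : ℕ} (ω : Config d) (ξ : ℕ → Bool) (a b : ℕ) (A : Set (Vtx d))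
    (x y : Vtx d) : Prop :=
  a ≤ b ∧ ∃ γ : ℕ → Vtx d, γ 0 = x ∧ γ (b - a) = y ∧
    (∀ i < b - a, adj (γ i) (γ (i + 1))) ∧
    (∀ i ≤ b - a, ∀ j ≤ b - a, γ i = γ j → i = j) ∧
    (∀ i ≤ b - a, γ i ∈ A) ∧ (∀ i ≤ b - a, ω (γ i) = ξ (a + i))

/-- The event `E_m^n(ξ)` : for `n = m` it is the sure event; for `n ≠ m` it asks for a
set `T ⊆ ∂Λ_n` with `|T| ≥ 8δ|∂Λ_n|` such that every `y ∈ T` is reached from some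
`x ∈ ∂Λ_{m+1}` by reading an initial segment `ξ_{[0,t]}`, `t ≤ (2k+1)^d n`, of the word
`ξ` along a self-avoiding path in the slab. -/
def Eevent (d k h : ℕ) (δ : ℝ) (m n : ℕ) (ξ : ℕ → Bool) : Set (Config d) :=
  if n = m then Set.univ else
    {ω | ∃ T : Set (Vtx d), T ⊆ lamBdry d k h n ∧
      8 * δ * ((lamBdry d k h n).ncard : ℝ) ≤ (T.ncard : ℝ) ∧
      ∀ y ∈ T, ∃ x ∈ lamBdry d k h (m + 1), ∃ t : ℕ,
        t ≤ (2 * k + 1) ^ d * n ∧ wordConnIn ω ξ 0 t (slabS d k h) x y}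

/-!
For every `N`, the event `E_m^n(ξ)` at a scale `n = 2^j m` with `j` large provides a self-avoiding
path in the slab reading `ξ` from `∂Λ_{m+1}` to `∂Λ_n`. Each step changes a coordinate by at most
one, so such a path has length at least `k (n - m - 1) ≥ N`. All these paths start in the finite
set `∂Λ_{m+1}` and the lattice is locally finite, so Kőnig's lemma extracts from them a single
infinite self-avoiding path reading `ξ`.
-/

/-- Kőnig's lemma, with `P n γ` a property of the initial segment `γ 0, …, γ n`. -/
theorem exists_forall_of_forall_exists_path {V : Type*} {B : Set V} (hB : B.Finite)
    {r : V → V → Prop} (hr : ∀ v, {w | r v w}.Finite) (P : ℕ → (ℕ → V) → Prop)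
    (hcongr : ∀ {n γ γ'}, (∀ i ≤ n, γ i = γ' i) → P n γ → P n γ')
    (hmono : ∀ {m n γ}, m ≤ n → P n γ → P m γ)
    (hstart : ∀ γ, P 0 γ → γ 0 ∈ B) (hstep : ∀ n γ, P (n + 1) γ → r (γ n) (γ (n + 1)))
    (hex : ∀ n, ∃ γ, P n γ) :
    ∃ Γ : ℕ → V, ∀ n, P n Γ := by
  let α : ℕ → Type _ := fun n => {p : Fin (n + 1) → V // ∃ γ, P n γ ∧ ∀ a : Fin (n + 1), γ a = p a}
  let π : {i j : ℕ} → i ≤ j → α j → α i := fun hij p =>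
    ⟨fun a => p.1 (Fin.castLE (by omega) a), by
      obtain ⟨γ, hγ, hp⟩ := p.2
      exact ⟨γ, hmono hij hγ, fun a => hp (Fin.castLE _ a)⟩⟩
  have : Finite (α 0) := by
    have := hB.to_subtype
    refine Finite.of_injective (β := B) (fun p => ⟨p.1 0, ?_⟩) fun p q hpq => ?_
    · obtain ⟨γ, hγ, hp⟩ := p.2
      exact hp 0 ▸ hstart γ hγ
    · exact Subtype.ext <| funext fun a => by
        simpa [Fin.fin_one_eq_zero a] using congrArg Subtype.val hpq
  have : ∀ n, Nonempty (α n) := fun n =>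
    let ⟨γ, hγ⟩ := hex n
    ⟨⟨fun a => γ a, γ, hγ, fun _ => rfl⟩⟩
  have hfin : ∀ i (a : α i), {b : α (i + 1) | π (Nat.le_add_right i 1) b = a}.Finite := by
    intro i a
    refine Set.Finite.of_finite_image (f := fun b : α (i + 1) => b.1 (Fin.last (i + 1)))
      ((hr (a.1 (Fin.last i))).subset ?_) ?_
    · rintro _ ⟨b, rfl, rfl⟩
      obtain ⟨γ, hγ, hb⟩ := b.2
      have hlast : γ i = (π (Nat.le_add_right i 1) b).1 (Fin.last i) := hb (Fin.last i).castSucc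
      simpa [← hlast, ← hb] using hstep i γ hγ
    · intro b hb b' hb' hbb'
      refine Subtype.ext <| funext <| Fin.lastCases hbb' fun c => ?_
      exact (congrFun (congrArg Subtype.val hb) c).trans
        (congrFun (congrArg Subtype.val hb') c).symm
  obtain ⟨f, hf⟩ := exists_seq_forall_proj_of_forall_finite π (fun _ _ => rfl)
    (fun _ _ _ _ _ _ => rfl) hfin
  refine ⟨fun n => (f n).1 (Fin.last n), fun n => ?_⟩
  obtain ⟨γ, hγ, hp⟩ := (f n).2
  refine hcongr (fun i hi => ?_) hγ
  rw [hp ⟨i, by omega⟩, ← hf hi]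
  rfl

section Lattice

variable {d : ℕ}

theorem abs_sub_le_one_of_adj {u v : Vtx d} (h : adj u v) (i : Fin d) : |u i - v i| ≤ 1 := by
  rw [← sq_le_one_iff_abs_le_one]
  calc (u i - v i) ^ 2 ≤ ∑ j, (u j - v j) ^ 2 :=
        Finset.single_le_sum (fun j _ => sq_nonneg (u j - v j)) (Finset.mem_univ i)
    _ = 1 := h

theorem finite_setOf_adj (x : Vtx d) : {y | adj x y}.Finite := by
  refine (Set.finite_Icc (x - 1) (x + 1)).subset fun y hy => ⟨fun i => ?_, fun i => ?_⟩ <;>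
  · have := abs_le.mp (abs_sub_le_one_of_adj hy i)
    simp only [Pi.sub_apply, Pi.add_apply, Pi.one_apply]
    linarith

theorem abs_sub_le_of_adj_chain {γ : ℕ → Vtx d} {t : ℕ}
    (hγ : ∀ s < t, adj (γ s) (γ (s + 1))) (i : Fin d) : |γ t i - γ 0 i| ≤ t := by
  induction t with
  | zero => simp
  | succ t ih =>
    have hstep := abs_sub_le_one_of_adj (hγ t t.lt_succ_self) i
    calc |γ (t + 1) i - γ 0 i| ≤ |γ t i - γ (t + 1) i| + |γ t i - γ 0 i| := by
          rw [abs_sub_comm (γ t i)]; exact abs_sub_le _ _ _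
      _ ≤ 1 + t := add_le_add hstep (ih fun s hs => hγ s (by omega))
      _ = ↑(t + 1) := by push_cast; ring

theorem lamBox_finite (k h n : ℕ) : (lamBox d k h n).Finite := by
  set M : ℤ := k * n + h * k + k
  refine (Set.finite_Icc (-fun _ => M : Vtx d) fun _ => M).subset fun x ⟨hS, hx⟩ => ?_
  suffices ∀ i, |x i| ≤ M from ⟨fun i => neg_le_of_abs_le (this i), fun i => le_of_abs_le (this i)⟩
  intro i
  have : 0 ≤ (k : ℤ) * n := by positivity
  have : 0 ≤ (h : ℤ) * k := by positivity
  rcases lt_trichotomy (i : ℕ) 2 with hi | hi | hi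
  · linarith [hx i (by omega)]
  · obtain ⟨h₁, h₂⟩ := (hS i).1 hi
    rw [abs_le]; constructor <;> linarith
  · obtain ⟨h₁, h₂⟩ := (hS i).2 hi
    rw [abs_le]; constructor <;> linarith

theorem lamBdry_finite (k h n : ℕ) : (lamBdry d k h n).Finite :=
  (lamBox_finite k h n).subset fun _ hx => hx.1

theorem exists_le_abs_of_mem_lamBdry {k h n : ℕ} {y : Vtx d} (hy : y ∈ lamBdry d k h n) :
    ∃ i : Fin d, (i : ℕ) ≤ 1 ∧ (k : ℤ) * n ≤ |y i| := by
  obtain ⟨-, z, hyz, hz, hzn⟩ := hy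
  have : ∃ i : Fin d, (i : ℕ) ≤ 1 ∧ (k : ℤ) * n < |z i| := by
    by_contra! h
    exact hzn ⟨hz, h⟩
  obtain ⟨i, hi, hzi⟩ := this
  refine ⟨i, hi, ?_⟩
  have := abs_sub_le_one_of_adj hyz i
  have := abs_sub_abs_le_abs_sub (z i) (y i)
  rw [abs_sub_comm] at this
  linarith

def slabPoint (c : ℤ) : Vtx d := fun i => if (i : ℕ) = 0 then c else if (i : ℕ) = 2 then 1 else 0

theorem slabPoint_mem_slabS {k h : ℕ} (hk : 1 ≤ k) (hh : 1 ≤ h) (c : ℤ) :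
    slabPoint c ∈ slabS d k h := by
  have : (1 : ℤ) ≤ h * k := by norm_cast; nlinarith
  intro i
  constructor
  · intro hi
    simp [slabPoint, hi, this]
  · intro hi
    simp [slabPoint, show (i : ℕ) ≠ 0 by omega, show (i : ℕ) ≠ 2 by omega]
    omega

theorem adj_slabPoint (hd : 0 < d) (c : ℤ) : adj (slabPoint (d := d) c) (slabPoint (c + 1)) := by
  unfold adj
  rw [Finset.sum_eq_single ⟨0, hd⟩ (fun i _ hi => by simp [slabPoint, Fin.ext_iff.not.mp hi])
    (by simp)]
  simp [slabPoint]

theorem lamBdry_nonempty (hd : 0 < d) {k h : ℕ} (hk : 1 ≤ k) (hh : 1 ≤ h) (n : ℕ) :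
    (lamBdry d k h n).Nonempty := by
  refine ⟨slabPoint (k * n), ⟨slabPoint_mem_slabS hk hh _, fun i hi => ?_⟩,
    slabPoint (k * n + 1), adj_slabPoint hd _, slabPoint_mem_slabS hk hh _, fun hout => ?_⟩
  · have : 0 ≤ (k : ℤ) * n := by positivity
    rcases Nat.le_one_iff_eq_zero_or_eq_one.mp hi with hi | hi <;>
      simp [slabPoint, hi, abs_of_nonneg this, this]
  · have := hout.2 ⟨0, hd⟩ (by simp)
    simp only [slabPoint, if_true] at this
    rw [abs_le] at this
    omega

end Lattice

section WordPaths

variable {d : ℕ} (ω : Config d) (ξ : ℕ → Bool) (A : Set (Vtx d))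

def IsWordPath (n : ℕ) (γ : ℕ → Vtx d) : Prop :=
  (∀ i < n, adj (γ i) (γ (i + 1))) ∧ (∀ i ≤ n, ∀ j ≤ n, γ i = γ j → i = j) ∧
    (∀ i ≤ n, γ i ∈ A) ∧ (∀ i ≤ n, ω (γ i) = ξ i)

variable {ω ξ A}

theorem IsWordPath.mono {m n : ℕ} {γ : ℕ → Vtx d} (hmn : m ≤ n) (hγ : IsWordPath ω ξ A n γ) :
    IsWordPath ω ξ A m γ :=
  ⟨fun i hi => hγ.1 i (by omega), fun i hi j hj => hγ.2.1 i (by omega) j (by omega),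
    fun i hi => hγ.2.2.1 i (by omega), fun i hi => hγ.2.2.2 i (by omega)⟩

theorem IsWordPath.congr {n : ℕ} {γ γ' : ℕ → Vtx d} (hγγ' : ∀ i ≤ n, γ i = γ' i)
    (hγ : IsWordPath ω ξ A n γ) : IsWordPath ω ξ A n γ' := by
  refine ⟨fun i hi => ?_, fun i hi j hj => ?_, fun i hi => ?_, fun i hi => ?_⟩
  · rw [← hγγ' i hi.le, ← hγγ' (i + 1) hi]; exact hγ.1 i hi
  · rw [← hγγ' i hi, ← hγγ' j hj]; exact hγ.2.1 i hi j hj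
  · rw [← hγγ' i hi]; exact hγ.2.2.1 i hi
  · rw [← hγγ' i hi]; exact hγ.2.2.2 i hi

theorem exists_isWordPath_of_wordConnIn {t : ℕ} {x y : Vtx d}
    (h : wordConnIn ω ξ 0 t A x y) : ∃ γ, γ 0 = x ∧ γ t = y ∧ IsWordPath ω ξ A t γ := by
  obtain ⟨-, γ, h₀, hₜ, hadj, hinj, hA, hξ⟩ := h
  simp only [Nat.sub_zero, zero_add] at hₜ hadj hinj hA hξ
  exact ⟨γ, h₀, hₜ, hadj, hinj, hA, hξ⟩

theorem seesWordIn_of_forall_isWordPath {Γ : ℕ → Vtx d} (hΓ : ∀ n, IsWordPath ω ξ A n Γ) :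
    seesWordIn ω ξ A (Γ 0) :=
  ⟨Γ, rfl, fun i j hij => (hΓ (max i j)).2.1 i (le_max_left i j) j (le_max_right i j) hij,
    fun i => (hΓ (i + 1)).1 i i.lt_succ_self, fun i => (hΓ i).2.2.1 i le_rfl,
    fun i => (hΓ i).2.2.2 i le_rfl⟩

end WordPaths

theorem exists_isWordPath_of_mem_Eevent {d k h m n : ℕ} {δ : ℝ} {ω : Config d} {ξ : ℕ → Bool}
    (hd : 0 < d) (hk : 1 ≤ k) (hh : 1 ≤ h) (hδ : 0 < δ) (hnm : n ≠ m)
    (hω : ω ∈ Eevent d k h δ m n ξ) :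
    ∃ γ t, γ 0 ∈ lamBdry d k h (m + 1) ∧ γ t ∈ lamBdry d k h n ∧
      IsWordPath ω ξ (slabS d k h) t γ := by
  rw [Eevent, if_neg hnm] at hω
  obtain ⟨T, hT, hcard, hpaths⟩ := hω
  have hbdry : 0 < ((lamBdry d k h n).ncard : ℝ) := by
    exact_mod_cast (Set.ncard_pos (lamBdry_finite k h n)).mpr (lamBdry_nonempty hd hk hh n)
  obtain ⟨y, hy⟩ : T.Nonempty := by
    refine Set.nonempty_of_ncard_ne_zero fun hT₀ => ?_
    rw [hT₀, Nat.cast_zero] at hcard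
    nlinarith
  obtain ⟨x, hx, t, -, hxy⟩ := hpaths y hy
  obtain ⟨γ, rfl, rfl, hγ⟩ := exists_isWordPath_of_wordConnIn hxy
  exact ⟨γ, t, hx, hT hy, hγ⟩

theorem exists_long_isWordPath {d k h m : ℕ} {δ : ℝ} {ω : Config d} {ξ : ℕ → Bool}
    (hd : 0 < d) (hk : 1 ≤ k) (hh : 1 ≤ h) (hm : 1 ≤ m) (hδ : 0 < δ)
    (hE : ∀ j : ℕ, ω ∈ Eevent d k h δ m (2 ^ j * m) ξ) (N : ℕ) :
    ∃ γ, γ 0 ∈ lamBdry d k h (m + 1) ∧ IsWordPath ω ξ (slabS d k h) N γ := by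
  set n := 2 ^ (N + m + 1) * m
  have hn : N + m + 1 < n :=
    Nat.lt_of_lt_of_le Nat.lt_two_pow_self (Nat.le_mul_of_pos_right _ hm)
  obtain ⟨γ, t, hx, hy, hγ⟩ :=
    exists_isWordPath_of_mem_Eevent hd hk hh hδ (by omega) (hE (N + m + 1))
  obtain ⟨i, hi, hyi⟩ := exists_le_abs_of_mem_lamBdry hy
  have hxi : |γ 0 i| ≤ k * (m + 1) := by exact_mod_cast hx.1.2 i hi
  have hNt : (N : ℤ) ≤ t := calc
    (N : ℤ) ≤ n - (m + 1) := by omega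
    _ ≤ k * (n - (m + 1)) := le_mul_of_one_le_left (by omega) (by exact_mod_cast hk)
    _ ≤ |γ t i| - |γ 0 i| := by linarith
    _ ≤ |γ t i - γ 0 i| := abs_sub_abs_le_abs_sub _ _
    _ ≤ t := abs_sub_le_of_adj_chain hγ.1 i
  exact ⟨γ, hx, hγ.mono (by exact_mod_cast hNt)⟩

/-- **Diagonal argument** : if the events `E_m^{2^j m}(ξ)` occur for all `j ≥ 0`, then
`ξ` is seen from some vertex of `∂Λ_{m+1}` within the slab `𝕊_h`. -/
theorem diagonal_argument
    (d : ℕ) (hd : 3 ≤ d) (ω : Config d) (ξ : ℕ → Bool)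
    (k h m : ℕ) (hk : 1 ≤ k) (hh : 2 ≤ h) (hm : 1 ≤ m)
    (δ : ℝ) (hδ : 0 < δ)
    (hE : ∀ j : ℕ, ω ∈ Eevent d k h δ m (2 ^ j * m) ξ) :
    ∃ x ∈ lamBdry d k h (m + 1), seesWordIn ω ξ (slabS d k h) x := by
  obtain ⟨Γ, hΓ⟩ := exists_forall_of_forall_exists_path (lamBdry_finite k h (m + 1))
    finite_setOf_adj
    (fun n γ => γ 0 ∈ lamBdry d k h (m + 1) ∧ IsWordPath ω ξ (slabS d k h) n γ)
    (fun hγγ' hγ => ⟨hγγ' 0 (Nat.zero_le _) ▸ hγ.1, hγ.2.congr hγγ'⟩)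
    (fun hmn hγ => ⟨hγ.1, hγ.2.mono hmn⟩)
    (fun _ hγ => hγ.1) (fun n _ hγ => hγ.2.1 n n.lt_succ_self)
    (exists_long_isWordPath (by omega) hk (by omega) hm hδ hE)
  exact ⟨Γ 0, (hΓ 0).1, seesWordIn_of_forall_isWordPath fun n => (hΓ n).2⟩

end PercWords
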